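/- For every n ≥ 2, the ternary automaton A_n with states v_1,...,v_n, where a maps v_i to v_{i+1} for 1 ≤ i ≤ n−2, b maps v_i to v_{i−1} for 2 ≤ i ≤ n−1, c maps v_{⌊n/2⌋} to v_n, and all other transitions are identities, is synchronizing with shortest reset word of length exactly n + ⌊n/2⌋ − 2. -/

import Mathlib

def actW {Q A : Type*} (δ : Q → A → Q) (q : Q) (w : List A) : Q := w.foldl δ q
def img {Q A : Type*} [Fintype Q] [DecidableEq Q] (δ : Q → A → Q) (w : List A) : Finset Q :=
  Finset.univ.image (fun q => actW δ q w)
def apAut (n : ℕ) : Fin (n + 2) → Fin 3 → Fin (n + 2) := fun q x =>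
  if x = 0 then (if h : (q : ℕ) < n then ⟨(q : ℕ) + 1, by omega⟩ else q)
  else if x = 1 then
    (if h : 1 ≤ (q : ℕ) ∧ (q : ℕ) ≤ n then ⟨(q : ℕ) - 1, by omega⟩ else q)
  else (if (q : ℕ) = (n + 2) / 2 - 1 then ⟨n + 1, by omega⟩ else q)

/-!
Number the states `0, …, n + 1`, so that `n + 1` is a sink, `a` and `b` move up and down the
path `0, …, n` (stopping at its ends) and `c` sends the middle state `n / 2` to the sink. The word
`b^n a^(n/2) c` first collapses the path onto `0`, then moves it to `n / 2` and kills it.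

For the lower bound follow the set `T ⊆ {0, …, n}` of states not yet in the sink. The letters
`a` and `b` act monotonically and merge at most the two states at one end of the path, and `c`
only removes `n / 2`. Hence the potential `|T| - 1 + extentCost n (n / 2) (min T) (max T)` drops
by at most one per letter; it vanishes at `T = ∅` and equals `n + n / 2 + 1` on the whole path.
-/

open Finset

section Synchronization

variable {Q A : Type*} (δ : Q → A → Q)

theorem actW_append (q : Q) (u v : List A) : actW δ q (u ++ v) = actW δ (actW δ q u) v :=
  List.foldl_append

theorem actW_nil (q : Q) : actW δ q [] = q := rfl

theorem actW_cons (q : Q) (x : A) (w : List A) : actW δ q (x :: w) = actW δ (δ q x) w := rfl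

theorem actW_eq_self {s : Q} (hs : ∀ x, δ s x = s) (w : List A) : actW δ s w = s := by
  induction w with
  | nil => rfl
  | cons x w ih => rwa [actW_cons, hs]

variable [Fintype Q] [DecidableEq Q]

theorem actW_eq_of_card_img_eq_one {s : Q} (hs : ∀ x, δ s x = s) {w : List A}
    (hw : (img δ w).card = 1) (q : Q) : actW δ q w = s := by
  obtain ⟨r, hr⟩ := card_eq_one.1 hw
  have hmem : ∀ q, actW δ q w ∈ img δ w := fun q => mem_image_of_mem _ (mem_univ q)
  have hq := hmem q
  have hs' := hmem s
  rw [hr, mem_singleton] at hq hs'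
  rw [hq, ← hs', actW_eq_self δ hs]

theorem card_img_eq_one_of_forall [Nonempty Q] {s : Q} {w : List A} (h : ∀ q, actW δ q w = s) :
    (img δ w).card = 1 := by
  simp only [img, h, image_const univ_nonempty, card_singleton]

end Synchronization

theorem Finset.card_le_card_image_add_one {α β : Type*} [DecidableEq α] [DecidableEq β]
    {f : α → β} (s : Finset α) (a : α) (hf : Set.InjOn f (s.erase a)) :
    s.card ≤ (s.image f).card + 1 :=
  calc s.card ≤ (s.erase a).card + 1 := by
        have := pred_card_le_card_erase (s := s) (a := a); omega
    _ = ((s.erase a).image f).card + 1 := by rw [card_image_of_injOn hf]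
    _ ≤ (s.image f).card + 1 := by gcongr; exact erase_subset a s

namespace ApAut

def extentCost (n k p q : ℕ) : ℕ :=
  min (min ((k - p) + 1 + 2 * (q - k)) ((q - min p k) + (k - p) + 1))
    (min ((n - q) + (n - k) + 1) (p + k + 1))

section ExtentCost

variable {n k p q : ℕ}

theorem extentCost_le_succ_succ (hpq : p ≤ q) (hq : q < n) :
    extentCost n k p q ≤ extentCost n k (p + 1) (q + 1) + 1 := by
  simp only [extentCost, ← min_add_add_right]
  refine le_min (le_min ?_ ?_) (le_min ?_ ?_) <;> omega

theorem extentCost_top_le (hp : p ≤ n) :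
    extentCost n k p n ≤ extentCost n k (min (p + 1) n) n := by
  simp only [extentCost]
  refine le_min (le_min ?_ ?_) (le_min ?_ ?_) <;> omega

theorem extentCost_le_pred_pred (hp : 1 ≤ p) (hpq : p ≤ q) (hq : q ≤ n) :
    extentCost n k p q ≤ extentCost n k (p - 1) (q - 1) + 1 := by
  simp only [extentCost, ← min_add_add_right]
  refine le_min (le_min ?_ ?_) (le_min ?_ ?_) <;> omega

theorem extentCost_bot_le (hq : q ≤ n) : extentCost n k 0 q ≤ extentCost n k 0 (q - 1) := by
  simp only [extentCost]
  refine le_min (le_min ?_ ?_) (le_min ?_ ?_) <;> omega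

theorem extentCost_min_max_le : extentCost n k (min k p) (max k q) ≤ extentCost n k p q := by
  simp only [extentCost]
  refine le_min (le_min ?_ ?_) (le_min ?_ ?_) <;> omega

theorem extentCost_zero_self : extentCost n k 0 n = min k (n - k) + 1 := by
  simp only [extentCost]; omega

end ExtentCost

def potential (n k : ℕ) (T : Finset ℕ) : ℕ :=
  if h : T.Nonempty then T.card - 1 + extentCost n k (T.min' h) (T.max' h) else 0

section Potential

variable {n k p q : ℕ} {T : Finset ℕ}

@[simp] theorem potential_empty : potential n k ∅ = 0 := by simp [potential]

theorem potential_eq (hp : IsLeast (T : Set ℕ) p) (hq : IsGreatest (T : Set ℕ) q) :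
    potential n k T = T.card - 1 + extentCost n k p q := by
  have hT : T.Nonempty := ⟨p, hp.1⟩
  rw [potential, dif_pos hT, (T.isLeast_min' hT).unique hp, (T.isGreatest_max' hT).unique hq]

theorem potential_image_eq {f : ℕ → ℕ} (hf : Monotone f) (hp : IsLeast (T : Set ℕ) p)
    (hq : IsGreatest (T : Set ℕ) q) :
    potential n k (T.image f) = (T.image f).card - 1 + extentCost n k (f p) (f q) :=
  potential_eq (by simpa only [coe_image] using hf.map_isLeast hp)
    (by simpa only [coe_image] using hf.map_isGreatest hq)

theorem exists_isLeast_isGreatest (hT : T.Nonempty) :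
    ∃ p q, IsLeast (T : Set ℕ) p ∧ IsGreatest (T : Set ℕ) q :=
  ⟨_, _, T.isLeast_min' hT, T.isGreatest_max' hT⟩

theorem potential_le_erase : potential n k T ≤ potential n k (T.erase k) + 1 := by
  by_cases hk : k ∈ T
  swap
  · rw [erase_eq_of_notMem hk]; omega
  rcases (T.erase k).eq_empty_or_nonempty with he | hne
  · obtain rfl | rfl := erase_eq_empty_iff _ _ |>.1 he
    · simp
    · simp [potential, extentCost]
  obtain ⟨p, q, hp, hq⟩ := exists_isLeast_isGreatest hne
  have hp' : IsLeast (T : Set ℕ) (min k p) := by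
    simpa only [← coe_insert, insert_erase hk] using hp.insert k
  have hq' : IsGreatest (T : Set ℕ) (max k q) := by
    simpa only [← coe_insert, insert_erase hk] using hq.insert k
  have hcard := card_erase_add_one hk
  have hpos := hne.card_pos
  have := extentCost_min_max_le (n := n) (k := k) (p := p) (q := q)
  rw [potential_eq hp' hq', potential_eq hp hq]
  omega

variable (hT : ∀ i ∈ T, i ≤ n)
include hT

theorem potential_le_image_succ :
    potential n k T ≤ potential n k (T.image fun i => min (i + 1) n) + 1 := by
  rcases T.eq_empty_or_nonempty with rfl | hne
  · simp
  obtain ⟨p, q, hp, hq⟩ := exists_isLeast_isGreatest hne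
  have hf : Monotone fun i => min (i + 1) n := fun i j h => by dsimp only; omega
  have hinj : Set.InjOn (fun i => min (i + 1) n) (Set.Iio n) := fun i hi j hj h => by
    simp only [Set.mem_Iio] at hi hj h; omega
  rw [potential_eq hp hq, potential_image_eq hf hp hq]
  have hpq : p ≤ q := hq.2 hp.1
  rcases (hT q hq.1).lt_or_eq with hqn | rfl
  · have hcard := card_image_of_injOn (hinj.mono fun i hi => (hq.2 hi).trans_lt hqn)
    have := extentCost_le_succ_succ (k := k) hpq hqn
    rw [hcard, min_eq_left (by omega : p + 1 ≤ n), min_eq_left (by omega : q + 1 ≤ n)]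
    omega
  · have hcard := T.card_le_card_image_add_one q (hinj.mono fun i hi => by
      obtain ⟨hiq, hiT⟩ := mem_erase.1 hi; exact (hT i hiT).lt_of_ne hiq)
    have := extentCost_top_le (k := k) (hT p hp.1)
    rw [min_eq_right (Nat.le_succ q)]
    omega

theorem potential_le_image_pred :
    potential n k T ≤ potential n k (T.image fun i => i - 1) + 1 := by
  rcases T.eq_empty_or_nonempty with rfl | hne
  · simp
  obtain ⟨p, q, hp, hq⟩ := exists_isLeast_isGreatest hne
  have hf : Monotone fun i => i - 1 := fun i j h => by dsimp only; omega
  have hinj : Set.InjOn (fun i => i - 1) (Set.Ici 1) := fun i hi j hj h => by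
    simp only [Set.mem_Ici] at hi hj h; omega
  rw [potential_eq hp hq, potential_image_eq hf hp hq]
  have hpq : p ≤ q := hq.2 hp.1
  rcases Nat.eq_zero_or_pos p with rfl | hp1
  · have hcard := T.card_le_card_image_add_one 0 (hinj.mono fun i hi => by
      obtain ⟨hi0, -⟩ := mem_erase.1 hi; exact Nat.one_le_iff_ne_zero.2 hi0)
    have := extentCost_bot_le (k := k) (hT q hq.1)
    rw [Nat.zero_sub]
    omega
  · have hcard := card_image_of_injOn (hinj.mono fun i hi => hp1.trans_le (hp.2 hi))
    have := extentCost_le_pred_pred (k := k) hp1 hpq (hT q hq.1)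
    omega

end Potential

end ApAut

section Letters

variable {n : ℕ}

theorem apAut_last (x : Fin 3) : apAut n (Fin.last (n + 1)) x = Fin.last (n + 1) := by
  simp only [apAut, Fin.val_last]
  split_ifs <;> simp only [Fin.ext_iff, Fin.val_last] <;> omega

theorem val_apAut_zero {q : Fin (n + 2)} (hq : (q : ℕ) ≤ n) :
    (apAut n q 0 : ℕ) = min ((q : ℕ) + 1) n := by
  unfold apAut
  split_ifs <;> simp_all
  omega

theorem val_apAut_one {q : Fin (n + 2)} (hq : (q : ℕ) ≤ n) : (apAut n q 1 : ℕ) = q - 1 := by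
  unfold apAut
  split_ifs <;> simp_all

theorem apAut_two (q : Fin (n + 2)) :
    apAut n q 2 = if (q : ℕ) = n / 2 then Fin.last (n + 1) else q := by
  unfold apAut
  split_ifs <;> simp_all [Fin.ext_iff]

end Letters

namespace ApAut

variable {n : ℕ}

def pathStates (n : ℕ) (S : Finset (Fin (n + 2))) : Finset ℕ := (S.image Fin.val).erase (n + 1)

theorem mem_pathStates {S : Finset (Fin (n + 2))} {i : ℕ} :
    i ∈ pathStates n S ↔ i ≤ n ∧ ∃ q ∈ S, (q : ℕ) = i := by
  simp only [pathStates, mem_erase, mem_image]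
  constructor
  · rintro ⟨hi, q, hq, rfl⟩
    exact ⟨by omega, q, hq, rfl⟩
  · rintro ⟨hi, hq⟩
    exact ⟨by omega, hq⟩

theorem pathStates_univ : pathStates n univ = Icc 0 n := by
  ext i
  simp only [mem_pathStates, mem_univ, true_and, mem_Icc, zero_le, and_iff_left_iff_imp]
  exact fun hi => ⟨⟨i, by omega⟩, rfl⟩

theorem pathStates_eq_empty {S : Finset (Fin (n + 2))} (hS : ∀ q ∈ S, q = Fin.last (n + 1)) :
    pathStates n S = ∅ := by
  ext i
  simp only [mem_pathStates, notMem_empty, iff_false, not_and]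
  rintro hi ⟨q, hq, rfl⟩
  simp [hS q hq] at hi

theorem pathStates_image {f : Fin (n + 2) → Fin (n + 2)} {g : ℕ → ℕ}
    (hlast : f (Fin.last (n + 1)) = Fin.last (n + 1))
    (hf : ∀ q : Fin (n + 2), (q : ℕ) ≤ n → (f q : ℕ) = g q ∧ g q ≤ n)
    (S : Finset (Fin (n + 2))) :
    pathStates n (S.image f) = (pathStates n S).image g := by
  ext i
  simp only [mem_pathStates, mem_image]
  constructor
  · rintro ⟨hi, _, ⟨q, hq, rfl⟩, rfl⟩
    have hqn : (q : ℕ) ≤ n := by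
      by_contra h
      rw [show q = Fin.last (n + 1) from Fin.ext (by simp; omega), hlast] at hi
      simp at hi
    exact ⟨q, ⟨hqn, q, hq, rfl⟩, (hf q hqn).1.symm⟩
  · rintro ⟨_, ⟨hqn, q, hq, rfl⟩, rfl⟩
    exact ⟨(hf q hqn).2, f q, ⟨q, hq, rfl⟩, (hf q hqn).1⟩

theorem pathStates_image_two (S : Finset (Fin (n + 2))) :
    pathStates n (S.image fun q => apAut n q 2) = (pathStates n S).erase (n / 2) := by
  ext i
  simp only [mem_pathStates, mem_erase, mem_image, exists_exists_and_eq_and, apAut_two]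
  constructor
  · rintro ⟨hi, q, hq, rfl⟩
    split_ifs at hi ⊢ with h
    · simp at hi
    · exact ⟨h, hi, q, hq, rfl⟩
  · rintro ⟨hk, hi, q, hq, rfl⟩
    exact ⟨hi, q, hq, by rw [if_neg hk]⟩

theorem potential_pathStates_le (x : Fin 3) (S : Finset (Fin (n + 2))) :
    potential n (n / 2) (pathStates n S) ≤
      potential n (n / 2) (pathStates n (S.image fun q => apAut n q x)) + 1 := by
  have hS : ∀ i ∈ pathStates n S, i ≤ n := fun i hi => (mem_pathStates.1 hi).1
  match x with
  | 0 =>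
    rw [pathStates_image (g := fun i => min (i + 1) n) (apAut_last 0)
      (fun q hq => ⟨val_apAut_zero hq, by omega⟩)]
    exact potential_le_image_succ hS
  | 1 =>
    rw [pathStates_image (g := fun i => i - 1) (apAut_last 1)
      (fun q hq => ⟨val_apAut_one hq, by omega⟩)]
    exact potential_le_image_pred hS
  | 2 =>
    rw [pathStates_image_two]
    exact potential_le_erase

theorem potential_pathStates_le_length (w : List (Fin 3)) (S : Finset (Fin (n + 2)))
    (hS : ∀ q ∈ S, actW (apAut n) q w = Fin.last (n + 1)) :
    potential n (n / 2) (pathStates n S) ≤ w.length := by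
  induction w generalizing S with
  | nil => simp [pathStates_eq_empty hS]
  | cons x w ih =>
    calc potential n (n / 2) (pathStates n S)
        ≤ potential n (n / 2) (pathStates n (S.image fun q => apAut n q x)) + 1 :=
          potential_pathStates_le x S
      _ ≤ w.length + 1 := by
          gcongr
          exact ih _ (forall_mem_image.2 hS)

theorem potential_pathStates_univ : potential n (n / 2) (pathStates n univ) = n + n / 2 + 1 := by
  rw [pathStates_univ, potential_eq (by simpa only [coe_Icc] using isLeast_Icc (Nat.zero_le n))
    (by simpa only [coe_Icc] using isGreatest_Icc (Nat.zero_le n)), Nat.card_Icc,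
    extentCost_zero_self]
  omega

def resetWord (n : ℕ) : List (Fin 3) := List.replicate n 1 ++ List.replicate (n / 2) 0 ++ [2]

theorem val_actW_replicate_one (j : ℕ) {q : Fin (n + 2)} (hq : (q : ℕ) ≤ n) :
    ((actW (apAut n) q (List.replicate j 1) : Fin (n + 2)) : ℕ) = q - j := by
  induction j generalizing q with
  | zero => rfl
  | succ j ih =>
    rw [List.replicate_succ, actW_cons, ih (by rw [val_apAut_one hq]; omega),
      val_apAut_one hq]
    omega

theorem val_actW_replicate_zero (j : ℕ) {q : Fin (n + 2)} (hq : (q : ℕ) ≤ n) :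
    ((actW (apAut n) q (List.replicate j 0) : Fin (n + 2)) : ℕ) = min (q + j) n := by
  induction j generalizing q with
  | zero => simpa [actW_nil] using hq
  | succ j ih =>
    rw [List.replicate_succ, actW_cons, ih (by rw [val_apAut_zero hq]; omega),
      val_apAut_zero hq]
    omega

theorem actW_resetWord (q : Fin (n + 2)) : actW (apAut n) q (resetWord n) = Fin.last (n + 1) := by
  by_cases hq : q = Fin.last (n + 1)
  · rw [hq]
    exact actW_eq_self _ apAut_last _
  have hqn : (q : ℕ) ≤ n := by
    have := Fin.val_lt_last hq
    omega
  have hb := val_actW_replicate_one n hqn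
  have ha := val_actW_replicate_zero (n / 2) (by rw [hb]; omega)
  rw [resetWord, actW_append, actW_append, actW_cons, actW_nil, apAut_two,
    if_pos (by rw [ha, hb]; omega)]

end ApAut

/-- $\mathcal{A}_n$ is synchronizing with shortest reset length exactly
n' + ⌊n'/2⌋ - 2 where n' = n+2 is the number of states. -/
theorem apAut_reset_length (n : ℕ) :
    (∃ w : List (Fin 3), (img (apAut n) w).card = 1 ∧
      w.length = (n + 2) + (n + 2) / 2 - 2) ∧
    (∀ w : List (Fin 3), (img (apAut n) w).card = 1 →
      (n + 2) + (n + 2) / 2 - 2 ≤ w.length) := by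
  refine ⟨⟨ApAut.resetWord n, card_img_eq_one_of_forall _ ApAut.actW_resetWord, ?_⟩,
    fun w hw => ?_⟩
  · simp only [ApAut.resetWord, List.length_append, List.length_replicate, List.length_singleton]
    omega
  · have := ApAut.potential_pathStates_le_length w univ
      fun q _ => actW_eq_of_card_img_eq_one _ apAut_last hw q
    rw [ApAut.potential_pathStates_univ] at this
    omega
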